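/- Let (x*,θ*) be an optimal solution of the LO model for which θ* is maximal among all optimal solutions. If Z_LO < θ*, then the arc-based randomized network interdiction value equals the LO value: Z_RNI = Z_LO. -/

import Mathlib

open scoped BigOperators

section NetworkInterdiction

variable {V E : Type} [Fintype V] [Fintype E] [DecidableEq V] [DecidableEq E]

/-- The basic assumptions on the network: the source and the sink are distinct,
no arc enters the source, no arc leaves the sink, and capacities are nonnegative. -/
def IsNetwork (src dst : E → V) (s t : V) (u : E → ℝ) : Prop :=
  s ≠ t ∧ (∀ e, dst e ≠ s) ∧ (∀ e, src e ≠ t) ∧ (∀ e, 0 ≤ u e)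

/-- Flow conservation at every node other than `s` and `t`. -/
def Conserves (src dst : E → V) (s t : V) (x : E → ℝ) : Prop :=
  ∀ v : V, v ≠ s → v ≠ t →
    ∑ e : E, (if dst e = v then x e else 0) = ∑ e : E, (if src e = v then x e else 0)

/-- `x` is an s-t-flow with respect to capacities `u`. -/
def IsFlow (src dst : E → V) (s t : V) (u : E → ℝ) (x : E → ℝ) : Prop :=
  (∀ e, 0 ≤ x e) ∧ (∀ e, x e ≤ u e) ∧ Conserves src dst s t x

/-- The value of a flow: the total flow into the sink `t`. -/
def flowVal (dst : E → V) (t : V) (x : E → ℝ) : ℝ :=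
  ∑ e : E, (if dst e = t then x e else 0)

/-- The payoff `f(μ,x)`: the maximum value of an s-t-flow `y` with `0 ≤ y_e ≤ x_e`
on the surviving arcs and `y_e = 0` on the removed arcs `μ`. -/
noncomputable def payoffF (src dst : E → V) (s t : V) (μ : Finset E) (x : E → ℝ) : ℝ :=
  sSup {z : ℝ | ∃ y : E → ℝ, (∀ e, 0 ≤ y e) ∧ (∀ e ∉ μ, y e ≤ x e) ∧
    (∀ e ∈ μ, y e = 0) ∧ Conserves src dst s t y ∧ z = flowVal dst t y}

/-- The scenario set `Ω`: all sets of exactly `Γ` arcs. -/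
def Scenarios (E : Type) [Fintype E] [DecidableEq E] (Γ : ℕ) : Finset (Finset E) :=
  Finset.univ.filter fun μ => μ.card = Γ

/-- `α` is a probability distribution on the scenario set `Ω`. -/
def IsDist (E : Type) [Fintype E] [DecidableEq E] (Γ : ℕ) (α : Finset E → ℝ) : Prop :=
  (∀ μ, 0 ≤ α μ) ∧ (∀ μ, μ ∉ Scenarios E Γ → α μ = 0) ∧
    ∑ μ ∈ Scenarios E Γ, α μ = 1

/-- `p` is (the list of arcs of) a directed path from `s` to `t`
visiting pairwise distinct vertices. -/
def IsSTPath (src dst : E → V) (s t : V) (p : List E) : Prop :=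
  p ≠ [] ∧ (∀ e ∈ p.head?, src e = s) ∧ (∀ e ∈ p.getLast?, dst e = t) ∧
  p.Chain' (fun e f => dst e = src f) ∧ (p.map src ++ [t]).Nodup

/-- The (finite) set `𝒫` of all directed s-t-paths. -/
noncomputable def stPaths (src dst : E → V) (s t : V) : Finset (List E) :=
  @Finset.filter _ (IsSTPath src dst s t) (Classical.decPred _)
    ((Finset.univ : Finset {l : List E // l.Nodup}).image Subtype.val)

/-- `xP` is a path-based s-t-flow with respect to capacities `u`. -/
noncomputable def IsPathFlow (src dst : E → V) (s t : V) (u : E → ℝ) (xP : List E → ℝ) : Prop :=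
  (∀ p, 0 ≤ xP p) ∧ (∀ p, p ∉ stPaths src dst s t → xP p = 0) ∧
  ∀ e : E, (∑ p ∈ stPaths src dst s t, if e ∈ p then xP p else 0) ≤ u e

/-- The path-based payoff `g(μ,x)`: the total flow on paths containing no removed arc. -/
noncomputable def payoffG (src dst : E → V) (s t : V) (μ : Finset E) (xP : List E → ℝ) : ℝ :=
  ∑ p ∈ stPaths src dst s t,
    max 0 (1 - ((p.countP fun e => decide (e ∈ μ)) : ℝ)) * xP p

/-- The network interdiction value `Z_NI`. -/
noncomputable def Z_NI (src dst : E → V) (s t : V) (u : E → ℝ) (Γ : ℕ) : ℝ :=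
  sInf {z : ℝ | ∃ μ ∈ Scenarios E Γ,
    z = sSup {w : ℝ | ∃ x : E → ℝ, IsFlow src dst s t u x ∧ w = payoffF src dst s t μ x}}

/-- The adaptive maximum flow value `Z_ADP`. -/
noncomputable def Z_ADP (src dst : E → V) (s t : V) (u : E → ℝ) (Γ : ℕ) : ℝ :=
  sSup {z : ℝ | ∃ x : E → ℝ, IsFlow src dst s t u x ∧
    z = sInf {w : ℝ | ∃ μ ∈ Scenarios E Γ, w = payoffF src dst s t μ x}}

/-- The (arc-based) randomized network interdiction value `Z_RNI`. -/
noncomputable def Z_RNI (src dst : E → V) (s t : V) (u : E → ℝ) (Γ : ℕ) : ℝ :=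
  sInf {z : ℝ | ∃ α : Finset E → ℝ, IsDist E Γ α ∧
    z = sSup {w : ℝ | ∃ x : E → ℝ, IsFlow src dst s t u x ∧
      w = ∑ μ ∈ Scenarios E Γ, α μ * payoffF src dst s t μ x}}

/-- The path-based network interdiction value `Z_NI^Path`. -/
noncomputable def Z_NIPath (src dst : E → V) (s t : V) (u : E → ℝ) (Γ : ℕ) : ℝ :=
  sInf {z : ℝ | ∃ μ ∈ Scenarios E Γ,
    z = sSup {w : ℝ | ∃ xP : List E → ℝ, IsPathFlow src dst s t u xP ∧
      w = payoffG src dst s t μ xP}}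

/-- The path-based adaptive maximum flow value `Z_ADP^Path`. -/
noncomputable def Z_ADPPath (src dst : E → V) (s t : V) (u : E → ℝ) (Γ : ℕ) : ℝ :=
  sSup {z : ℝ | ∃ xP : List E → ℝ, IsPathFlow src dst s t u xP ∧
    z = sInf {w : ℝ | ∃ μ ∈ Scenarios E Γ, w = payoffG src dst s t μ xP}}

/-- The path-based randomized network interdiction value `Z_RNI^Path`. -/
noncomputable def Z_RNIPath (src dst : E → V) (s t : V) (u : E → ℝ) (Γ : ℕ) : ℝ :=
  sInf {z : ℝ | ∃ α : Finset E → ℝ, IsDist E Γ α ∧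
    z = sSup {w : ℝ | ∃ xP : List E → ℝ, IsPathFlow src dst s t u xP ∧
      w = ∑ μ ∈ Scenarios E Γ, α μ * payoffG src dst s t μ xP}}

/-- The value `Z_LO(θ)` of the parametric LO model. -/
noncomputable def Z_LOAt (src dst : E → V) (s t : V) (u : E → ℝ) (Γ : ℕ) (θ : ℝ) : ℝ :=
  sSup {z : ℝ | ∃ x : E → ℝ, IsFlow src dst s t u x ∧ (∀ e, x e ≤ θ) ∧
    z = flowVal dst t x - Γ * θ}

/-- The optimal value `Z_LO` of the LO model. -/
noncomputable def Z_LO (src dst : E → V) (s t : V) (u : E → ℝ) (Γ : ℕ) : ℝ :=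
  sSup {z : ℝ | ∃ θ : ℝ, 0 ≤ θ ∧ z = Z_LOAt src dst s t u Γ θ}

/-- `(x, θ)` is an optimal solution of the LO model. -/
noncomputable def IsLOOptimal (src dst : E → V) (s t : V) (u : E → ℝ) (Γ : ℕ)
    (x : E → ℝ) (θ : ℝ) : Prop :=
  IsFlow src dst s t u x ∧ 0 ≤ θ ∧ (∀ e, x e ≤ θ) ∧
    flowVal dst t x - Γ * θ = Z_LO src dst s t u Γ

/-- The set `δ⁺(S)` of arcs going from `S` to its complement. -/
def cutArcs (src dst : E → V) (S : Finset V) : Finset E :=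
  Finset.univ.filter fun e => src e ∈ S ∧ dst e ∉ S

/-- The capacity `Cap(S,θ)` of a cut with respect to the truncated capacities `u(θ)`. -/
noncomputable def cutCap (src dst : E → V) (u : E → ℝ) (S : Finset V) (θ : ℝ) : ℝ :=
  ∑ e ∈ cutArcs src dst S, min (u e) θ

/-- The set `A(S,θ)` of arcs in `δ⁺(S)` with `θ ≤ u_e`. -/
noncomputable def cutA (src dst : E → V) (u : E → ℝ) (S : Finset V) (θ : ℝ) : Finset E :=
  @Finset.filter _ (fun e => θ ≤ u e) (Classical.decPred _) (cutArcs src dst S)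

/-- The set `B(S,θ)` of arcs in `δ⁺(S)` with `θ < u_e`. -/
noncomputable def cutB (src dst : E → V) (u : E → ℝ) (S : Finset V) (θ : ℝ) : Finset E :=
  @Finset.filter _ (fun e => θ < u e) (Classical.decPred _) (cutArcs src dst S)

/-- A directed cycle (closed directed walk) all of whose arcs lie in `S`. -/
def HasCycleIn (src dst : E → V) (S : Set E) : Prop :=
  ∃ c : List E, c ≠ [] ∧ (∀ e ∈ c, e ∈ S) ∧ c.Chain' (fun e f => dst e = src f) ∧
    ∀ e ∈ c.getLast?, ∀ f ∈ c.head?, dst e = src f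

section Aux
set_option linter.unusedSectionVars false
variable {V E : Type} [Fintype V] [Fintype E] [DecidableEq V] [DecidableEq E]
variable (src dst : E → V) (s t : V)

/-- Excess (net inflow) at a vertex. -/
noncomputable def exs (y : E → ℝ) (v : V) : ℝ :=
  (∑ e : E, if dst e = v then y e else 0) - (∑ e : E, if src e = v then y e else 0)

lemma conserves_iff_exs (y : E → ℝ) :
    Conserves src dst s t y ↔ ∀ v : V, v ≠ s → v ≠ t → exs src dst y v = 0 := by
  unfold Conserves exs
  constructor
  · intro h v hs ht; rw [h v hs ht]; ring
  · intro h v hs ht; have := h v hs ht; linarith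

/-- The reverse cut arcs. -/
def revCutArcs (S : Finset V) : Finset E :=
  Finset.univ.filter fun e => dst e ∈ S ∧ src e ∉ S

lemma sum_exs (y : E → ℝ) (S : Finset V) :
    ∑ v ∈ S, exs src dst y v =
      ∑ e ∈ revCutArcs src dst S, y e - ∑ e ∈ cutArcs src dst S, y e := by
  unfold exs
  rw [Finset.sum_sub_distrib]
  have h1 : ∀ w : E → V, ∑ v ∈ S, ∑ e : E, (if w e = v then y e else 0)
      = ∑ e : E, (if w e ∈ S then y e else 0) := by
    intro w
    rw [Finset.sum_comm]
    refine Finset.sum_congr rfl fun e _ => ?_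
    exact Finset.sum_ite_eq S (w e) (fun _ => y e)
  rw [h1, h1]
  have h2 : ∀ e : E, (if dst e ∈ S then y e else 0) - (if src e ∈ S then y e else 0)
      = (if dst e ∈ S ∧ src e ∉ S then y e else 0)
        - (if src e ∈ S ∧ dst e ∉ S then y e else 0) := by
    intro e
    by_cases h1' : dst e ∈ S <;> by_cases h2' : src e ∈ S <;> simp [h1', h2']
  rw [← Finset.sum_sub_distrib]
  simp_rw [h2]
  rw [Finset.sum_sub_distrib]
  unfold revCutArcs cutArcs
  rw [Finset.sum_filter, Finset.sum_filter]

/-- Flow value as net flow across any s-t cut. -/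
lemma flowVal_eq_cut (hst : s ≠ t) (hds : ∀ e, dst e ≠ s) (hsrc : ∀ e, src e ≠ t)
    (y : E → ℝ) (hy : Conserves src dst s t y) (S : Finset V) (hs : s ∈ S) (ht : t ∉ S) :
    flowVal dst t y = ∑ e ∈ cutArcs src dst S, y e - ∑ e ∈ revCutArcs src dst S, y e := by
  have hexs := (conserves_iff_exs src dst s t y).1 hy
  have key : ∀ T : Finset V, s ∈ T → t ∉ T →
      ∑ e ∈ cutArcs src dst T, y e - ∑ e ∈ revCutArcs src dst T, y e
        = - exs src dst y s := by
    intro T hsT htT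
    have hsum : ∑ v ∈ T, exs src dst y v = exs src dst y s := by
      refine Finset.sum_eq_single_of_mem s hsT fun v hv hvs => ?_
      exact hexs v hvs (fun h => htT (h ▸ hv))
    have := sum_exs src dst y T
    rw [hsum] at this
    linarith
  have h1 := key S hs ht
  have h2 := key (Finset.univ.erase t) (Finset.mem_erase.2 ⟨hst, Finset.mem_univ s⟩)
    (by simp)
  have hcutT : cutArcs src dst (Finset.univ.erase t)
      = Finset.univ.filter (fun e => dst e = t) := by
    unfold cutArcs
    refine Finset.filter_congr fun e _ => ?_
    simp [Finset.mem_erase, hsrc e]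
  have hrevT : revCutArcs src dst (Finset.univ.erase t) = ∅ := by
    unfold revCutArcs
    refine Finset.filter_eq_empty_iff.2 fun e _ => ?_
    simp [Finset.mem_erase, hsrc e]
  rw [hcutT, hrevT, Finset.sum_empty, sub_zero, Finset.sum_filter] at h2
  have hfv : flowVal dst t y = ∑ e : E, (if dst e = t then y e else 0) := rfl
  rw [hfv]
  linarith

/-- Weak duality: flow value is at most forward cut capacity. -/
lemma flowVal_le_cut (hst : s ≠ t) (hds : ∀ e, dst e ≠ s) (hsrc : ∀ e, src e ≠ t)
    (c y : E → ℝ) (hy0 : ∀ e, 0 ≤ y e) (hyc : ∀ e, y e ≤ c e)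
    (hy : Conserves src dst s t y) (S : Finset V) (hs : s ∈ S) (ht : t ∉ S) :
    flowVal dst t y ≤ ∑ e ∈ cutArcs src dst S, c e := by
  rw [flowVal_eq_cut src dst s t hst hds hsrc y hy S hs ht]
  have h1 : ∑ e ∈ cutArcs src dst S, y e ≤ ∑ e ∈ cutArcs src dst S, c e :=
    Finset.sum_le_sum fun e _ => hyc e
  have h2 : 0 ≤ ∑ e ∈ revCutArcs src dst S, y e :=
    Finset.sum_nonneg fun e _ => hy0 e
  linarith

end Aux

section Aux2
set_option linter.unusedSectionVars false
variable {V E : Type} [Fintype V] [Fintype E] [DecidableEq V] [DecidableEq E]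
variable (src dst : E → V) (s t : V)

lemma continuous_flowSum (w : E → V) (v : V) :
    Continuous (fun y : E → ℝ => ∑ e : E, if w e = v then y e else 0) := by
  refine continuous_finset_sum _ fun e _ => ?_
  exact Continuous.if_const _ (continuous_apply e) continuous_const

lemma zero_flow (c : E → ℝ) (hc : ∀ e, 0 ≤ c e) :
    IsFlow src dst s t c (fun _ => 0) := by
  refine ⟨fun e => le_refl 0, fun e => hc e, fun v hs ht => ?_⟩
  simp

lemma exists_max_flow (c : E → ℝ) (hc : ∀ e, 0 ≤ c e) :
    ∃ y, IsFlow src dst s t c y ∧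
      ∀ y', IsFlow src dst s t c y' → flowVal dst t y' ≤ flowVal dst t y := by
  classical
  set K : Set (E → ℝ) := {y | IsFlow src dst s t c y} with hKdef
  have hKeq : K = (⋂ e : E, {y : E → ℝ | 0 ≤ y e}) ∩
      ((⋂ e : E, {y : E → ℝ | y e ≤ c e}) ∩
      (⋂ v : V, ⋂ (_ : v ≠ s), ⋂ (_ : v ≠ t),
        {y : E → ℝ | ∑ e : E, (if dst e = v then y e else 0)
          = ∑ e : E, (if src e = v then y e else 0)})) := by
    ext y
    simp only [hKdef, Set.mem_setOf_eq, Set.mem_inter_iff, Set.mem_iInter,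
      IsFlow, Conserves]
  have hclosed : IsClosed K := by
    rw [hKeq]
    refine IsClosed.inter (isClosed_iInter fun e => ?_)
      (IsClosed.inter (isClosed_iInter fun e => ?_)
        (isClosed_iInter fun v => isClosed_iInter fun _ => isClosed_iInter fun _ => ?_))
    · exact isClosed_le continuous_const (continuous_apply e)
    · exact isClosed_le (continuous_apply e) continuous_const
    · exact isClosed_eq (continuous_flowSum dst v) (continuous_flowSum src v)
  have hsub : K ⊆ Set.pi Set.univ (fun e => Set.Icc (0:ℝ) (c e)) := by
    intro y hy e _
    exact ⟨hy.1 e, hy.2.1 e⟩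
  have hcpt : IsCompact K :=
    IsCompact.of_isClosed_subset (isCompact_univ_pi fun e => isCompact_Icc) hclosed hsub
  have hne : K.Nonempty := ⟨fun _ => 0, zero_flow src dst s t c hc⟩
  have hcont : ContinuousOn (flowVal dst t) K :=
    (continuous_flowSum dst t).continuousOn
  obtain ⟨y₀, hy₀K, hmax⟩ := hcpt.exists_isMaxOn hne hcont
  exact ⟨y₀, hy₀K, fun y' hy' => hmax hy'⟩

lemma exs_update (y : E → ℝ) (e : E) (a : ℝ) (v : V) :
    exs src dst (fun f => if f = e then y f + a else y f) v
      = exs src dst y v + (if dst e = v then a else 0) - (if src e = v then a else 0) := by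
  unfold exs
  have h1 : ∀ w : E → V,
      (∑ f : E, if w f = v then (if f = e then y f + a else y f) else 0)
        = (∑ f : E, if w f = v then y f else 0) + (if w e = v then a else 0) := by
    intro w
    have : ∀ f : E, (if w f = v then (if f = e then y f + a else y f) else 0)
        = (if w f = v then y f else 0) + (if f = e then (if w f = v then a else 0) else 0) := by
      intro f
      by_cases h1' : f = e
      · subst h1'
        by_cases h2' : w f = v <;> simp [h2']
      · simp [h1']
    rw [Finset.sum_congr rfl (fun f _ => this f), Finset.sum_add_distrib]
    congr 1
    rw [Finset.sum_ite_eq' Finset.univ e (fun f => if w f = v then a else 0)]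
    simp
  rw [h1, h1]
  ring

lemma flowVal_eq_exs (hsrc : ∀ e, src e ≠ t) (y : E → ℝ) :
    flowVal dst t y = exs src dst y t := by
  unfold flowVal exs
  have : (∑ e : E, if src e = t then y e else 0) = 0 := by
    refine Finset.sum_eq_zero fun e _ => ?_
    simp [hsrc e]
  rw [this]; ring

end Aux2

section Aux3
set_option linter.unusedSectionVars false
set_option maxHeartbeats 1000000
variable {V E : Type} [Fintype V] [Fintype E] [DecidableEq V] [DecidableEq E]
variable (src dst : E → V) (s t : V)

lemma maxflow_mincut (c : E → ℝ) (hc : ∀ e, 0 ≤ c e) (hst : s ≠ t)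
    (hds : ∀ e, dst e ≠ s) (hsrc : ∀ e, src e ≠ t) :
    ∃ y, IsFlow src dst s t c y ∧
      (∀ y', IsFlow src dst s t c y' → flowVal dst t y' ≤ flowVal dst t y) ∧
      ∃ S : Finset V, s ∈ S ∧ t ∉ S ∧
        flowVal dst t y = ∑ e ∈ cutArcs src dst S, c e := by
  classical
  obtain ⟨y₀, hy₀, hmax⟩ := exists_max_flow src dst s t c hc
  set Step : V → V → Prop := fun v w => ∃ e : E,
    (src e = v ∧ dst e = w ∧ y₀ e < c e) ∨ (dst e = v ∧ src e = w ∧ 0 < y₀ e) with hStep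
  have hcons₀ := (conserves_iff_exs src dst s t y₀).1 hy₀.2.2
  by_cases hreach : Relation.ReflTransGen Step s t
  · exfalso
    have claim : ∀ v, Relation.ReflTransGen Step s v →
        ∃ δ : ℝ, 0 < δ ∧ ∃ K : ℝ, 0 ≤ K ∧
        ∀ ε : ℝ, 0 < ε → ε ≤ δ → ∃ y' : E → ℝ,
          (∀ e, 0 ≤ y' e) ∧ (∀ e, y' e ≤ c e) ∧
          (∀ w, w ≠ s → w ≠ t → w ≠ v → exs src dst y' w = 0) ∧
          (v ≠ s → exs src dst y' v = exs src dst y₀ v + ε) ∧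
          (v ≠ t → exs src dst y' t = exs src dst y₀ t) ∧
          (∀ e, |y' e - y₀ e| ≤ K * ε) := by
      intro v h
      induction h with
      | refl =>
        refine ⟨1, one_pos, 0, le_refl 0, fun ε hε hε1 =>
          ⟨y₀, hy₀.1, hy₀.2.1, ?_, ?_, ?_, ?_⟩⟩
        · intro w hws hwt _; exact hcons₀ w hws hwt
        · intro h; exact absurd rfl h
        · intro _; rfl
        · intro e; simp
      | @tail b w h₁ h₂ ih =>
        obtain ⟨δ, hδ, K, hK, hgen⟩ := ih
        obtain ⟨e, he⟩ := h₂
        have hK1 : (0:ℝ) < K + 1 := by linarith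
        rcases he with ⟨hse, hde, hlt'⟩ | ⟨hde, hse, hpos⟩
        · -- forward residual arc from b to w
          refine ⟨min δ ((c e - y₀ e)/(K+1)), lt_min hδ (div_pos (by linarith) hK1),
            K + 1, by linarith, fun ε hε hεδ => ?_⟩
          obtain ⟨y', h0, hcap, hconsv, hexb, hext, hnear⟩ :=
            hgen ε hε (le_trans hεδ (min_le_left _ _))
          have habs := abs_le.1 (hnear e)
          have hεe : (K+1)*ε ≤ c e - y₀ e := by
            have h := le_trans hεδ (min_le_right _ _)
            have := mul_le_mul_of_nonneg_left h (le_of_lt hK1)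
            rwa [mul_div_cancel₀ _ (ne_of_gt hK1)] at this
          have hbt : b ≠ t := fun h => hsrc e (hse.trans h)
          refine ⟨fun f => if f = e then y' f + ε else y' f, ?_, ?_, ?_, ?_, ?_, ?_⟩
          · intro f
            by_cases hf : f = e
            · subst hf; beta_reduce; rw [if_pos rfl]; have := h0 f; linarith
            · beta_reduce; rw [if_neg hf]; exact h0 f
          · intro f
            by_cases hf : f = e
            · subst hf; beta_reduce; rw [if_pos rfl]; linarith [habs.2]
            · beta_reduce; rw [if_neg hf]; exact hcap f
          · intro w' hw's hw't hw'w
            rw [exs_update src dst y' e ε w']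
            have hdw' : ¬ dst e = w' := fun h => hw'w (h.symm.trans hde)
            by_cases hbw' : src e = w'
            · rw [if_neg hdw', if_pos hbw']
              have hw'b : w' = b := hbw' ▸ hse
              have h1 : exs src dst y' b = exs src dst y₀ b + ε :=
                hexb (fun h => hw's (hw'b.trans h))
              have h2 : exs src dst y₀ b = 0 :=
                hcons₀ b (fun h => hw's (hw'b.trans h)) (fun h => hw't (hw'b.trans h))
              rw [hw'b, h1, h2]; ring
            · rw [if_neg hdw', if_neg hbw']
              have hw'b : w' ≠ b := fun h => hbw' (hse.trans h.symm)
              have := hconsv w' hw's hw't hw'b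
              rw [this]; ring
          · intro hws
            rw [exs_update src dst y' e ε w, if_pos hde]
            by_cases hbw : src e = w
            · rw [if_pos hbw]
              have hbw2 : b = w := hse.symm.trans hbw
              have h1 : exs src dst y' b = exs src dst y₀ b + ε :=
                hexb (fun h => hws (hbw2.symm.trans h))
              rw [← hbw2, h1]; ring
            · rw [if_neg hbw]
              have hwb : w ≠ b := fun h => hbw (hse.trans h.symm)
              by_cases hwt : w = t
              · have h1 : exs src dst y' t = exs src dst y₀ t := hext hbt
                rw [hwt, h1]; ring
              · have h1 := hconsv w hws hwt hwb
                have h2 := hcons₀ w hws hwt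
                rw [h1, h2]; ring
          · intro hwt
            rw [exs_update src dst y' e ε t,
              if_neg (fun h : dst e = t => hwt (hde.symm.trans h)),
              if_neg (fun h : src e = t => hsrc e h)]
            have h1 : exs src dst y' t = exs src dst y₀ t := hext hbt
            rw [h1]; ring
          · intro f
            by_cases hf : f = e
            · subst hf
              beta_reduce
              rw [if_pos rfl]
              have h := hnear f
              calc |y' f + ε - y₀ f| ≤ |y' f - y₀ f| + |ε| := by
                    have := abs_add_le (y' f - y₀ f) ε
                    rw [show y' f + ε - y₀ f = y' f - y₀ f + ε by ring]; exact this
                _ ≤ K * ε + ε := by rw [abs_of_pos hε]; linarith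
                _ = (K+1) * ε := by ring
            · beta_reduce; rw [if_neg hf]
              have := hnear f
              nlinarith
        · -- backward residual arc: e goes from w to b
          refine ⟨min δ (y₀ e/(K+1)), lt_min hδ (div_pos hpos hK1),
            K + 1, by linarith, fun ε hε hεδ => ?_⟩
          obtain ⟨y', h0, hcap, hconsv, hexb, hext, hnear⟩ :=
            hgen ε hε (le_trans hεδ (min_le_left _ _))
          have habs := abs_le.1 (hnear e)
          have hεe : (K+1)*ε ≤ y₀ e := by
            have h := le_trans hεδ (min_le_right _ _)
            have := mul_le_mul_of_nonneg_left h (le_of_lt hK1)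
            rwa [mul_div_cancel₀ _ (ne_of_gt hK1)] at this
          have hwt' : w ≠ t := fun h => hsrc e (hse.trans h)
          refine ⟨fun f => if f = e then y' f + (-ε) else y' f, ?_, ?_, ?_, ?_, ?_, ?_⟩
          · intro f
            by_cases hf : f = e
            · subst hf; beta_reduce; rw [if_pos rfl]; linarith [habs.1]
            · beta_reduce; rw [if_neg hf]; exact h0 f
          · intro f
            by_cases hf : f = e
            · subst hf; beta_reduce; rw [if_pos rfl]; have := hcap f; linarith
            · beta_reduce; rw [if_neg hf]; exact hcap f
          · intro w' hw's hw't hw'w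
            rw [exs_update src dst y' e (-ε) w']
            have hsw' : ¬ src e = w' := fun h => hw'w (h.symm.trans hse)
            by_cases hbw' : dst e = w'
            · rw [if_pos hbw', if_neg hsw']
              have hw'b : w' = b := hbw' ▸ hde
              have h1 : exs src dst y' b = exs src dst y₀ b + ε :=
                hexb (fun h => hw's (hw'b.trans h))
              have h2 : exs src dst y₀ b = 0 :=
                hcons₀ b (fun h => hw's (hw'b.trans h)) (fun h => hw't (hw'b.trans h))
              rw [hw'b, h1, h2]; ring
            · rw [if_neg hbw', if_neg hsw']
              have hw'b : w' ≠ b := fun h => hbw' (hde.trans h.symm)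
              have := hconsv w' hw's hw't hw'b
              rw [this]; ring
          · intro hws
            rw [exs_update src dst y' e (-ε) w, if_pos hse]
            by_cases hbw : dst e = w
            · rw [if_pos hbw]
              have hbw2 : b = w := hde.symm.trans hbw
              have h1 : exs src dst y' b = exs src dst y₀ b + ε :=
                hexb (fun h => hws (hbw2.symm.trans h))
              rw [← hbw2, h1]; ring
            · rw [if_neg hbw]
              have hwb : w ≠ b := fun h => hbw (hde.trans h.symm)
              have h1 := hconsv w hws hwt' hwb
              have h2 := hcons₀ w hws hwt'
              rw [h1, h2]; ring
          · intro hwt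
            rw [exs_update src dst y' e (-ε) t,
              if_neg (fun h : src e = t => hsrc e h)]
            by_cases hbt : dst e = t
            · rw [if_pos hbt]
              have hbt2 : b = t := hde.symm.trans hbt
              have h1 : exs src dst y' b = exs src dst y₀ b + ε :=
                hexb (fun h => hst (hbt2.symm.trans h).symm)
              rw [← hbt2, h1]; ring
            · rw [if_neg hbt]
              have h1 : exs src dst y' t = exs src dst y₀ t :=
                hext (fun h => hbt (hde.trans h))
              rw [h1]; ring
          · intro f
            by_cases hf : f = e
            · subst hf
              beta_reduce
              rw [if_pos rfl]
              have h := hnear f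
              calc |y' f + (-ε) - y₀ f| ≤ |y' f - y₀ f| + |(-ε)| := by
                    have := abs_add_le (y' f - y₀ f) (-ε)
                    rw [show y' f + (-ε) - y₀ f = y' f - y₀ f + (-ε) by ring]; exact this
                _ ≤ K * ε + ε := by rw [abs_neg, abs_of_pos hε]; linarith
                _ = (K+1) * ε := by ring
            · beta_reduce; rw [if_neg hf]
              have := hnear f
              nlinarith
    obtain ⟨δ, hδ, K, hK, hgen⟩ := claim t hreach
    obtain ⟨y', h0, hcap, hconsv, hexb, hext, hnear⟩ := hgen δ hδ le_rfl
    have hflow' : IsFlow src dst s t c y' :=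
      ⟨h0, hcap, (conserves_iff_exs src dst s t y').2
        (fun v hvs hvt => hconsv v hvs hvt hvt)⟩
    have h1 : exs src dst y' t = exs src dst y₀ t + δ :=
      hexb (fun h => hst h.symm)
    have h2 : flowVal dst t y' = flowVal dst t y₀ + δ := by
      rw [flowVal_eq_exs src dst t hsrc, flowVal_eq_exs src dst t hsrc, h1]
    have := hmax y' hflow'
    linarith
  · refine ⟨y₀, hy₀, hmax,
      Finset.univ.filter (fun v => Relation.ReflTransGen Step s v), ?_, ?_, ?_⟩
    · exact Finset.mem_filter.2 ⟨Finset.mem_univ s, Relation.ReflTransGen.refl⟩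
    · intro h
      exact hreach (Finset.mem_filter.1 h).2
    · set S := Finset.univ.filter (fun v => Relation.ReflTransGen Step s v) with hS
      have hsS : s ∈ S := Finset.mem_filter.2 ⟨Finset.mem_univ s, Relation.ReflTransGen.refl⟩
      have htS : t ∉ S := fun h => hreach (Finset.mem_filter.1 h).2
      rw [flowVal_eq_cut src dst s t hst hds hsrc y₀ hy₀.2.2 S hsS htS]
      have hcut : ∀ e ∈ cutArcs src dst S, y₀ e = c e := by
        intro e he
        have he' := (Finset.mem_filter.1 he).2
        by_contra hne
        have hlt' : y₀ e < c e := lt_of_le_of_ne (hy₀.2.1 e) hne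
        have hr : Relation.ReflTransGen Step s (src e) := (Finset.mem_filter.1
          (by exact he'.1 : src e ∈ S)).2
        have : Relation.ReflTransGen Step s (dst e) :=
          hr.tail ⟨e, Or.inl ⟨rfl, rfl, hlt'⟩⟩
        exact he'.2 (Finset.mem_filter.2 ⟨Finset.mem_univ _, this⟩)
      have hrev : ∀ e ∈ revCutArcs src dst S, y₀ e = 0 := by
        intro e he
        have he' := (Finset.mem_filter.1 he).2
        by_contra hne
        have hpos : 0 < y₀ e := lt_of_le_of_ne (hy₀.1 e) (Ne.symm hne)
        have hr : Relation.ReflTransGen Step s (dst e) := (Finset.mem_filter.1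
          (by exact he'.1 : dst e ∈ S)).2
        have : Relation.ReflTransGen Step s (src e) :=
          hr.tail ⟨e, Or.inr ⟨rfl, rfl, hpos⟩⟩
        exact he'.2 (Finset.mem_filter.2 ⟨Finset.mem_univ _, this⟩)
      rw [Finset.sum_congr rfl hcut, Finset.sum_eq_zero hrev, sub_zero]

end Aux3

section Aux4
set_option linter.unusedSectionVars false
variable {V E : Type} [Fintype V] [Fintype E] [DecidableEq V] [DecidableEq E]
variable (src dst : E → V) (s t : V)

lemma payoffF_le (μ : Finset E) (x : E → ℝ) (B : ℝ) (hB : 0 ≤ B)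
    (h : ∀ y : E → ℝ, (∀ e, 0 ≤ y e) → (∀ e ∉ μ, y e ≤ x e) → (∀ e ∈ μ, y e = 0) →
      Conserves src dst s t y → flowVal dst t y ≤ B) :
    payoffF src dst s t μ x ≤ B := by
  apply Real.sSup_le _ hB
  rintro z ⟨y, h1, h2, h3, h4, rfl⟩
  exact h y h1 h2 h3 h4

lemma payoffF_bddAbove (μ : Finset E) (x : E → ℝ) :
    BddAbove {z : ℝ | ∃ y : E → ℝ, (∀ e, 0 ≤ y e) ∧ (∀ e ∉ μ, y e ≤ x e) ∧
      (∀ e ∈ μ, y e = 0) ∧ Conserves src dst s t y ∧ z = flowVal dst t y} := by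
  refine ⟨∑ e : E, max (x e) 0, ?_⟩
  rintro z ⟨y, h1, h2, h3, h4, rfl⟩
  unfold flowVal
  apply Finset.sum_le_sum
  intro e _
  by_cases hd : dst e = t
  · rw [if_pos hd]
    by_cases hμ : e ∈ μ
    · rw [h3 e hμ]; exact le_max_right _ _
    · exact le_trans (h2 e hμ) (le_max_left _ _)
  · rw [if_neg hd]; exact le_max_right _ _

lemma le_payoffF (μ : Finset E) (x : E → ℝ) (y : E → ℝ)
    (h1 : ∀ e, 0 ≤ y e) (h2 : ∀ e ∉ μ, y e ≤ x e) (h3 : ∀ e ∈ μ, y e = 0)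
    (h4 : Conserves src dst s t y) :
    flowVal dst t y ≤ payoffF src dst s t μ x :=
  le_csSup (payoffF_bddAbove src dst s t μ x) ⟨y, h1, h2, h3, h4, rfl⟩

lemma flowVal_le_capSum (u y : E → ℝ) (hu : ∀ e, 0 ≤ u e) (hy : ∀ e, y e ≤ u e) :
    flowVal dst t y ≤ ∑ e : E, u e := by
  unfold flowVal
  apply Finset.sum_le_sum
  intro e _
  by_cases hd : dst e = t
  · rw [if_pos hd]; exact hy e
  · rw [if_neg hd]; exact hu e

lemma ZLOAt_bddAbove (u : E → ℝ) (Γ : ℕ) (θ' : ℝ) (hu : ∀ e, 0 ≤ u e) (hθ' : 0 ≤ θ') :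
    BddAbove {z : ℝ | ∃ x : E → ℝ, IsFlow src dst s t u x ∧ (∀ e, x e ≤ θ') ∧
      z = flowVal dst t x - Γ * θ'} := by
  refine ⟨∑ e : E, u e, ?_⟩
  rintro z ⟨x, hx, hxθ, rfl⟩
  have h1 := flowVal_le_capSum dst t u x hu hx.2.1
  have h2 : 0 ≤ (Γ:ℝ) * θ' := by positivity
  linarith

lemma ZLOAt_le_capSum (u : E → ℝ) (Γ : ℕ) (θ' : ℝ) (hu : ∀ e, 0 ≤ u e) (hθ' : 0 ≤ θ') :
    Z_LOAt src dst s t u Γ θ' ≤ ∑ e : E, u e := by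
  apply Real.sSup_le _ (Finset.sum_nonneg fun e _ => hu e)
  rintro z ⟨x, hx, hxθ, rfl⟩
  have h1 := flowVal_le_capSum dst t u x hu hx.2.1
  have h2 : 0 ≤ (Γ:ℝ) * θ' := by positivity
  linarith

end Aux4

set_option maxHeartbeats 1000000

/-- if `Z_LO < θ*` for an optimal LO solution `(x*,θ*)` with maximal `θ*`,
then `Z_RNI = Z_LO`. -/
theorem Z_RNI_eq_Z_LO_of_lt_theta (src dst : E → V) (s t : V) (u : E → ℝ) (Γ : ℕ)
    (hnet : IsNetwork src dst s t u) (hΓ1 : 1 ≤ Γ) (hΓE : Γ ≤ Fintype.card E)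
    (x : E → ℝ) (θ : ℝ) (hopt : IsLOOptimal src dst s t u Γ x θ)
    (hmax : ∀ (x' : E → ℝ) (θ' : ℝ), IsLOOptimal src dst s t u Γ x' θ' → θ' ≤ θ)
    (hlt : Z_LO src dst s t u Γ < θ) :
    Z_RNI src dst s t u Γ = Z_LO src dst s t u Γ := by
  classical
  obtain ⟨hst, hds, hsrc, hu⟩ := hnet
  obtain ⟨hxf, hθ0, hxθ, hZeq⟩ := hopt
  set U : ℝ := ∑ e : E, u e with hUdef
  have hU0 : 0 ≤ U := Finset.sum_nonneg fun e _ => hu e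
  have hbddZset : BddAbove {z : ℝ | ∃ θ'' : ℝ, 0 ≤ θ'' ∧ z = Z_LOAt src dst s t u Γ θ''} := by
    refine ⟨U, ?_⟩
    rintro z ⟨θ'', hθ'', rfl⟩
    exact ZLOAt_le_capSum src dst s t u Γ θ'' hu hθ''
  have hle_ZLO : ∀ θ' : ℝ, 0 ≤ θ' → Z_LOAt src dst s t u Γ θ' ≤ Z_LO src dst s t u Γ := by
    intro θ' hθ'
    exact le_csSup hbddZset ⟨θ', hθ', rfl⟩
  have hZLO0 : 0 ≤ Z_LO src dst s t u Γ := by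
    have h0 : Z_LOAt src dst s t u Γ 0 = 0 := by
      have hset : {z : ℝ | ∃ x' : E → ℝ, IsFlow src dst s t u x' ∧ (∀ e, x' e ≤ (0:ℝ)) ∧
          z = flowVal dst t x' - Γ * 0} = {0} := by
        ext z
        simp only [Set.mem_setOf_eq, Set.mem_singleton_iff]
        constructor
        · rintro ⟨x', hx', hx0, rfl⟩
          have hx'0 : ∀ e, x' e = 0 := fun e => le_antisymm (hx0 e) (hx'.1 e)
          have hfv : flowVal dst t x' = 0 := by
            unfold flowVal
            apply Finset.sum_eq_zero
            intro e _
            by_cases hd : dst e = t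
            · rw [if_pos hd, hx'0 e]
            · rw [if_neg hd]
          rw [hfv]; ring
        · intro hz
          refine ⟨fun _ => 0, zero_flow src dst s t u hu, fun e => le_refl 0, ?_⟩
          have hfv : flowVal dst t (fun _ => (0:ℝ)) = 0 := by
            unfold flowVal; apply Finset.sum_eq_zero; intro e _
            by_cases hd : dst e = t
            · rw [if_pos hd]
            · rw [if_neg hd]
          rw [hfv, hz]; ring
      unfold Z_LOAt
      rw [hset, csSup_singleton]
    have h1 := hle_ZLO 0 le_rfl
    rw [h0] at h1
    exact h1
  have hθpos : 0 < θ := lt_of_le_of_lt hZLO0 hlt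
  have hvx : flowVal dst t x = Z_LO src dst s t u Γ + Γ * θ := by linarith [hZeq]
  have hpayU : ∀ (μ : Finset E) (x' : E → ℝ), (∀ e, x' e ≤ u e) →
      payoffF src dst s t μ x' ≤ U := by
    intro μ x' hx'
    apply payoffF_le src dst s t μ x' U hU0
    intro y hy0 hyx hyμ hyc
    apply flowVal_le_capSum dst t u y hu
    intro e
    by_cases hμ : e ∈ μ
    · rw [hyμ e hμ]; exact hu e
    · exact le_trans (hyx e hμ) (hx' e)
  have hlow : ∀ (α : Finset E → ℝ), IsDist E Γ α →
      Z_LO src dst s t u Γ ≤ sSup {w : ℝ | ∃ x' : E → ℝ, IsFlow src dst s t u x' ∧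
        w = ∑ μ ∈ Scenarios E Γ, α μ * payoffF src dst s t μ x'} := by
    intro α hα
    have hbdd : BddAbove {w : ℝ | ∃ x' : E → ℝ, IsFlow src dst s t u x' ∧
        w = ∑ μ ∈ Scenarios E Γ, α μ * payoffF src dst s t μ x'} := by
      refine ⟨U, ?_⟩
      rintro w ⟨x', hx', rfl⟩
      calc ∑ μ ∈ Scenarios E Γ, α μ * payoffF src dst s t μ x'
          ≤ ∑ μ ∈ Scenarios E Γ, α μ * U :=
            Finset.sum_le_sum fun μ _ => mul_le_mul_of_nonneg_left
              (hpayU μ x' hx'.2.1) (hα.1 μ)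
        _ = U := by rw [← Finset.sum_mul, hα.2.2, one_mul]
    have hfμ : ∀ μ ∈ Scenarios E Γ, Z_LO src dst s t u Γ ≤ payoffF src dst s t μ x := by
      intro μ hμ
      have hμcard : μ.card = Γ := (Finset.mem_filter.1 hμ).2
      set c : E → ℝ := fun e => if e ∈ μ then 0 else x e with hcdef
      have hc0 : ∀ e, 0 ≤ c e := by
        intro e
        by_cases h : e ∈ μ
        · simp [hcdef, h]
        · simp only [hcdef, if_neg h]; exact hxf.1 e
      obtain ⟨y, hyf, hymax, S₂, hsS₂, htS₂, hycut⟩ :=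
        maxflow_mincut src dst s t c hc0 hst hds hsrc
      have hyx : ∀ e ∉ μ, y e ≤ x e := by
        intro e he
        have h1 := hyf.2.1 e
        rw [hcdef] at h1
        simpa [he] using h1
      have hyμ : ∀ e ∈ μ, y e = 0 := by
        intro e he
        have h1 := hyf.2.1 e
        rw [hcdef] at h1
        simp only [if_pos he] at h1
        exact le_antisymm h1 (hyf.1 e)
      have hpay := le_payoffF src dst s t μ x y hyf.1 hyx hyμ hyf.2.2
      have hxcut : flowVal dst t x ≤ ∑ e ∈ cutArcs src dst S₂, x e :=
        flowVal_le_cut src dst s t hst hds hsrc x x hxf.1 (fun e => le_refl _)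
          hxf.2.2 S₂ hsS₂ htS₂
      have hcsum : ∑ e ∈ cutArcs src dst S₂, x e - ∑ e ∈ μ, x e
          ≤ ∑ e ∈ cutArcs src dst S₂, c e := by
        have h2 : ∀ e ∈ cutArcs src dst S₂, x e - c e = (if e ∈ μ then x e else 0) := by
          intro e _
          by_cases h : e ∈ μ <;> simp [hcdef, h]
        have h1 : ∑ e ∈ cutArcs src dst S₂, (x e - c e) ≤ ∑ e ∈ μ, x e := by
          rw [Finset.sum_congr rfl h2, ← Finset.sum_filter]
          exact Finset.sum_le_sum_of_subset_of_nonneg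
            (fun e he => (Finset.mem_filter.1 he).2) (fun e _ _ => hxf.1 e)
        rw [Finset.sum_sub_distrib] at h1
        linarith
      have hμθ : ∑ e ∈ μ, x e ≤ (Γ:ℝ) * θ := by
        calc ∑ e ∈ μ, x e ≤ ∑ e ∈ μ, θ := Finset.sum_le_sum fun e _ => hxθ e
          _ = (Γ:ℝ) * θ := by rw [Finset.sum_const, nsmul_eq_mul, hμcard]
      have hZy : Z_LO src dst s t u Γ ≤ flowVal dst t y := by
        rw [hycut]; linarith
      linarith
    have hmem : (∑ μ ∈ Scenarios E Γ, α μ * payoffF src dst s t μ x)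
        ∈ {w : ℝ | ∃ x' : E → ℝ, IsFlow src dst s t u x' ∧
          w = ∑ μ ∈ Scenarios E Γ, α μ * payoffF src dst s t μ x'} := ⟨x, hxf, rfl⟩
    have hZw : Z_LO src dst s t u Γ
        ≤ ∑ μ ∈ Scenarios E Γ, α μ * payoffF src dst s t μ x := by
      have h1 : Z_LO src dst s t u Γ
          = ∑ μ ∈ Scenarios E Γ, α μ * Z_LO src dst s t u Γ := by
        rw [← Finset.sum_mul, hα.2.2, one_mul]
      rw [h1]
      exact Finset.sum_le_sum fun μ hμ =>
        mul_le_mul_of_nonneg_left (hfμ μ hμ) (hα.1 μ)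
    exact le_trans hZw (le_csSup hbdd hmem)
  have hdirac : ∀ μ₀ : Finset E, μ₀ ∈ Scenarios E Γ →
      IsDist E Γ (fun μ => if μ = μ₀ then (1:ℝ) else 0) := by
    intro μ₀ h0
    refine ⟨fun μ => ?_, fun μ hμ => ?_, ?_⟩
    · by_cases h : μ = μ₀ <;> simp [h]
    · have hne : μ ≠ μ₀ := fun h => hμ (h ▸ h0)
      simp [hne]
    · rw [Finset.sum_ite_eq' (Scenarios E Γ) μ₀ (fun _ => (1:ℝ)), if_pos h0]
  set RS : Set ℝ := {z : ℝ | ∃ α : Finset E → ℝ, IsDist E Γ α ∧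
    z = sSup {w : ℝ | ∃ x' : E → ℝ, IsFlow src dst s t u x' ∧
      w = ∑ μ ∈ Scenarios E Γ, α μ * payoffF src dst s t μ x'}} with hRSdef
  have hZRNI : Z_RNI src dst s t u Γ = sInf RS := rfl
  have hRSlb : ∀ z ∈ RS, Z_LO src dst s t u Γ ≤ z := by
    rintro z ⟨α', hα', rfl⟩
    exact hlow α' hα'
  obtain ⟨μd, hμdsub, hμdcard⟩ := Finset.exists_subset_card_eq (s := (Finset.univ : Finset E)) (n := Γ)
    (by simpa using hΓE)
  have hμdScen : μd ∈ Scenarios E Γ := Finset.mem_filter.2 ⟨Finset.mem_univ _, hμdcard⟩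
  have hRSne : RS.Nonempty :=
    ⟨_, ⟨fun μ => if μ = μd then (1:ℝ) else 0, hdirac μd hμdScen, rfl⟩⟩
  have hge : Z_LO src dst s t u Γ ≤ Z_RNI src dst s t u Γ := by
    rw [hZRNI]
    exact le_csInf hRSne hRSlb
  have hup : Z_RNI src dst s t u Γ ≤ Z_LO src dst s t u Γ := by
    rw [hZRNI]
    apply le_of_forall_pos_le_add
    intro η hη
    have hEne : (Finset.univ : Finset E).Nonempty := by
      rw [← Finset.card_pos, Finset.card_univ]
      exact lt_of_lt_of_le hΓ1 hΓE
    set ε0 : ℝ := Finset.univ.inf' hEne (fun e => if u e < θ then θ - u e else θ) with hε0def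
    have hε0pos : 0 < ε0 := by
      rw [hε0def, Finset.lt_inf'_iff]
      intro e _
      by_cases h : u e < θ
      · rw [if_pos h]; linarith
      · rw [if_neg h]; exact hθpos
    have hε0gap : ∀ e : E, u e < θ → ε0 ≤ θ - u e := by
      intro e h
      have h1 := Finset.inf'_le (f := fun e => if u e < θ then θ - u e else θ)
        (Finset.mem_univ e)
      rwa [if_pos h] at h1
    have hε0θ : ε0 ≤ θ := by
      obtain ⟨e, _⟩ := hEne
      have h1 := Finset.inf'_le (f := fun e => if u e < θ then θ - u e else θ)
        (Finset.mem_univ e)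
      by_cases h : u e < θ
      · rw [if_pos h] at h1; linarith [hu e]
      · rwa [if_neg h] at h1
    set N : ℝ := (Fintype.card E : ℝ) + 1 with hNdef
    have hcard0 : (0:ℝ) ≤ (Fintype.card E : ℝ) := Nat.cast_nonneg _
    have hN1 : 1 ≤ N := by rw [hNdef]; linarith
    have hNpos : 0 < N := lt_of_lt_of_le one_pos hN1
    have hcardN : (Fintype.card E : ℝ) ≤ N := by rw [hNdef]; linarith
    set ε : ℝ := min (min (ε0/2) ((θ - Z_LO src dst s t u Γ)/(2*N))) (η/N) with hεdef
    have hεpos : 0 < ε := by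
      refine lt_min (lt_min (by linarith) ?_) (div_pos hη hNpos)
      apply div_pos (by linarith) (by linarith)
    have hεε0 : ε < ε0 :=
      lt_of_le_of_lt (le_trans (min_le_left _ _) (min_le_left _ _)) (by linarith)
    have hεcard : ε * (Fintype.card E : ℝ) < θ - Z_LO src dst s t u Γ := by
      have h1 : ε ≤ (θ - Z_LO src dst s t u Γ)/(2*N) :=
        le_trans (min_le_left _ _) (min_le_right _ _)
      have h2 : ε * (Fintype.card E : ℝ) ≤ ε * N := by nlinarith
      have h3 : ε * N ≤ ((θ - Z_LO src dst s t u Γ)/(2*N)) * N := by nlinarith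
      have h4 : ((θ - Z_LO src dst s t u Γ)/(2*N)) * N = (θ - Z_LO src dst s t u Γ)/2 := by
        field_simp
      nlinarith
    have hεη : ε * (Fintype.card E : ℝ) ≤ η := by
      have h1 : ε ≤ η/N := min_le_right _ _
      calc ε * (Fintype.card E : ℝ) ≤ (η/N) * (Fintype.card E : ℝ) :=
            mul_le_mul_of_nonneg_right h1 hcard0
        _ ≤ (η/N) * N := mul_le_mul_of_nonneg_left hcardN (div_nonneg hη.le hNpos.le)
        _ = η := div_mul_cancel₀ η (ne_of_gt hNpos)
    set θm : ℝ := θ - ε with hθmdef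
    have hθmpos : 0 < θm := by
      rw [hθmdef]
      have := hε0θ
      linarith [hεε0]
    set cm : E → ℝ := fun e => min (u e) θm with hcmdef
    have hcm0 : ∀ e, 0 ≤ cm e := fun e => le_min (hu e) hθmpos.le
    obtain ⟨ym, hymf, hymmax, S, hsS, htS, hymcut⟩ :=
      maxflow_mincut src dst s t cm hcm0 hst hds hsrc
    have hymu : IsFlow src dst s t u ym :=
      ⟨hymf.1, fun e => le_trans (hymf.2.1 e) (min_le_left _ _), hymf.2.2⟩
    have hymθm : ∀ e, ym e ≤ θm := fun e => le_trans (hymf.2.1 e) (min_le_right _ _)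
    have hMm : flowVal dst t ym ≤ Z_LO src dst s t u Γ + Γ * θm := by
      have h1 : flowVal dst t ym - Γ * θm ≤ Z_LOAt src dst s t u Γ θm :=
        le_csSup (ZLOAt_bddAbove src dst s t u Γ θm hu hθmpos.le) ⟨ym, hymu, hymθm, rfl⟩
      have h2 := hle_ZLO θm hθmpos.le
      linarith
    have hcutm : cutCap src dst u S θm = flowVal dst t ym := by
      rw [hymcut]
      unfold cutCap
      apply Finset.sum_congr rfl
      intro e _
      rw [hcmdef]
    have hAfilter : Finset.filter (fun e => θ ≤ u e) (cutArcs src dst S)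
        = cutA src dst u S θ := by
      unfold cutA
      congr 1
    have hgap : cutCap src dst u S θ
        = cutCap src dst u S θm + ε * ((cutA src dst u S θ).card : ℝ) := by
      unfold cutCap
      have h1 : ∀ e ∈ cutArcs src dst S,
          min (u e) θ = min (u e) θm + (if θ ≤ u e then ε else 0) := by
        intro e _
        by_cases h : θ ≤ u e
        · rw [if_pos h, min_eq_right h, min_eq_right (by rw [hθmdef]; linarith)]
          rw [hθmdef]; ring
        · push_neg at h
          have h2 : u e ≤ θm := by
            have := hε0gap e h
            rw [hθmdef]; linarith
          rw [if_neg (not_le.2 h), min_eq_left h.le, min_eq_left h2]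
          ring
      rw [Finset.sum_congr rfl h1, Finset.sum_add_distrib]
      congr 1
      rw [← Finset.sum_filter, hAfilter, Finset.sum_const, nsmul_eq_mul, mul_comm]
    have hxcutθ : flowVal dst t x ≤ cutCap src dst u S θ := by
      have h1 := flowVal_le_cut src dst s t hst hds hsrc (fun e => min (u e) θ) x hxf.1
        (fun e => le_min (hxf.2.1 e) (hxθ e)) hxf.2.2 S hsS htS
      exact h1
    have hΓθm : (Γ:ℝ) * θm = Γ * θ - Γ * ε := by rw [hθmdef]; ring
    have hAΓR : (Γ:ℝ) ≤ ((cutA src dst u S θ).card : ℝ) := by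
      have h2 : (Γ:ℝ) * ε ≤ ((cutA src dst u S θ).card : ℝ) * ε := by
        have h2a : ε * ((cutA src dst u S θ).card : ℝ)
            = ((cutA src dst u S θ).card : ℝ) * ε := by ring
        linarith [hxcutθ, hgap, hcutm, hMm, hvx, hΓθm, h2a]
      exact le_of_mul_le_mul_right h2 hεpos
    have hAΓ : Γ ≤ (cutA src dst u S θ).card := by exact_mod_cast hAΓR
    have hAcardE : ((cutA src dst u S θ).card : ℝ) ≤ (Fintype.card E : ℝ) := by
      exact_mod_cast Finset.card_le_univ _
    have hcapθ : cutCap src dst u S θ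
        ≤ Z_LO src dst s t u Γ + Γ * θ + ε * (Fintype.card E : ℝ) := by
      have h6 : ε * ((cutA src dst u S θ).card : ℝ) ≤ ε * (Fintype.card E : ℝ) :=
        mul_le_mul_of_nonneg_left hAcardE hεpos.le
      have h7 : 0 ≤ (Γ:ℝ) * ε := mul_nonneg (Nat.cast_nonneg Γ) hεpos.le
      linarith [hgap, hMm, hcutm, hΓθm, h6, h7]
    have hBsub : cutB src dst u S θ ⊆ cutA src dst u S θ := by
      intro e he
      have h1 := Finset.mem_filter.1 he
      exact Finset.mem_filter.2 ⟨h1.1, le_of_lt h1.2⟩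
    have hBcut : cutB src dst u S θ ⊆ cutArcs src dst S :=
      fun e he => (Finset.mem_filter.1 he).1
    have hBΓ : (cutB src dst u S θ).card ≤ Γ := by
      have h1 : ((cutB src dst u S θ).card : ℝ) * θ ≤ cutCap src dst u S θ := by
        calc ((cutB src dst u S θ).card : ℝ) * θ = ∑ _e ∈ cutB src dst u S θ, θ := by
              rw [Finset.sum_const, nsmul_eq_mul]
          _ = ∑ e ∈ cutB src dst u S θ, min (u e) θ :=
              Finset.sum_congr rfl fun e he =>
                (min_eq_right (le_of_lt (Finset.mem_filter.1 he).2)).symm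
          _ ≤ ∑ e ∈ cutArcs src dst S, min (u e) θ :=
              Finset.sum_le_sum_of_subset_of_nonneg hBcut
                (fun e _ _ => le_min (hu e) hθpos.le)
          _ = cutCap src dst u S θ := rfl
      have h2 : ((cutB src dst u S θ).card : ℝ) * θ < ((Γ:ℝ) + 1) * θ := by
        have h3 : cutCap src dst u S θ < Z_LO src dst s t u Γ + Γ * θ + (θ - Z_LO src dst s t u Γ) := by
          linarith [hcapθ, hεcard]
        have h4 : ((Γ:ℝ) + 1) * θ = Γ * θ + θ := by ring
        linarith
      have h3 : ((cutB src dst u S θ).card : ℝ) < (Γ:ℝ) + 1 :=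
        lt_of_mul_lt_mul_right (by linarith [h2]) hθpos.le
      have h4 : (cutB src dst u S θ).card < Γ + 1 := by exact_mod_cast h3
      omega
    obtain ⟨μ0, hBμ0, hμ0A, hμ0card⟩ := Finset.exists_subsuperset_card_eq hBsub hBΓ hAΓ
    have hμ0cut : μ0 ⊆ cutArcs src dst S :=
      fun e he => (Finset.mem_filter.1 (hμ0A he)).1
    have hμ0Scen : μ0 ∈ Scenarios E Γ := Finset.mem_filter.2 ⟨Finset.mem_univ _, hμ0card⟩
    have hcapB : 0 ≤ cutCap src dst u S θ - Γ * θ := by linarith [hxcutθ, hvx, hZLO0]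
    have hbound : ∀ x' : E → ℝ, IsFlow src dst s t u x' →
        payoffF src dst s t μ0 x' ≤ cutCap src dst u S θ - Γ * θ := by
      intro x' hx'
      apply payoffF_le src dst s t μ0 x' _ hcapB
      intro y hy0 hyx hyμ hyc
      have hval := flowVal_eq_cut src dst s t hst hds hsrc y hyc S hsS htS
      have hbwd : 0 ≤ ∑ e ∈ revCutArcs src dst S, y e :=
        Finset.sum_nonneg fun e _ => hy0 e
      have hsplit := Finset.sum_sdiff (f := y) hμ0cut
      have hyμ0 : ∑ e ∈ μ0, y e = 0 := Finset.sum_eq_zero fun e he => hyμ e he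
      have hrest : ∑ e ∈ cutArcs src dst S \ μ0, y e
          ≤ ∑ e ∈ cutArcs src dst S \ μ0, min (u e) θ := by
        apply Finset.sum_le_sum
        intro e he
        obtain ⟨hecut, heμ0⟩ := Finset.mem_sdiff.1 he
        have hyu : y e ≤ u e := le_trans (hyx e heμ0) (hx'.2.1 e)
        have huθ : u e ≤ θ := by
          by_cases h : θ < u e
          · exact absurd (hBμ0 (Finset.mem_filter.2 ⟨hecut, h⟩)) heμ0
          · exact not_lt.1 h
        rw [min_eq_left huθ]
        exact hyu
      have hsplitc := Finset.sum_sdiff (f := fun e => min (u e) θ) hμ0cut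
      have hμ0min : ∑ e ∈ μ0, min (u e) θ = (Γ:ℝ) * θ := by
        have h5 : ∀ e ∈ μ0, min (u e) θ = θ := fun e he =>
          min_eq_right (Finset.mem_filter.1 (hμ0A he)).2
        rw [Finset.sum_congr rfl h5, Finset.sum_const, nsmul_eq_mul, hμ0card]
      have hcc : cutCap src dst u S θ = ∑ e ∈ cutArcs src dst S, min (u e) θ := rfl
      rw [hval, hcc]
      linarith
    have hsuple : sSup {w : ℝ | ∃ x' : E → ℝ, IsFlow src dst s t u x' ∧
        w = ∑ μ ∈ Scenarios E Γ, (if μ = μ0 then (1:ℝ) else 0) * payoffF src dst s t μ x'}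
        ≤ Z_LO src dst s t u Γ + η := by
      apply Real.sSup_le _ (by linarith)
      rintro w ⟨x', hx', rfl⟩
      have hsum : ∑ μ ∈ Scenarios E Γ,
          (if μ = μ0 then (1:ℝ) else 0) * payoffF src dst s t μ x'
          = payoffF src dst s t μ0 x' := by
        simp only [ite_mul, one_mul, zero_mul]
        rw [Finset.sum_ite_eq' (Scenarios E Γ) μ0
          (fun μ => payoffF src dst s t μ x'), if_pos hμ0Scen]
      rw [hsum]
      calc payoffF src dst s t μ0 x' ≤ cutCap src dst u S θ - Γ * θ := hbound x' hx'
        _ ≤ Z_LO src dst s t u Γ + ε * (Fintype.card E : ℝ) := by linarith [hcapθ]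
        _ ≤ Z_LO src dst s t u Γ + η := by linarith [hεη]
    refine le_trans (csInf_le ⟨Z_LO src dst s t u Γ, fun z hz => hRSlb z hz⟩
      ⟨fun μ => if μ = μ0 then (1:ℝ) else 0, hdirac μ0 hμ0Scen, rfl⟩) hsuple
  exact le_antisymm hup hge


end NetworkInterdiction
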